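/- arXiv:2102.08525 — 8 statements merged into one kernel-verified Lean document; each statement's English description precedes it below -/
import Mathlib

section
/- Excision property: Let Γ ⊆ ℙⁿ be a finite set satisfying CB(r), and let 𝒫 = P₁ ∪ … ∪ P_ℓ be a plane configuration of length ℓ with ℓ ≤ r. Then the set Γ \ 𝒫 satisfies CB(r − ℓ). In particular, the complement of Γ by a single positive-dimensional projective linear subspace satisfies CB(r − 1). -/
open MvPolynomial

/-- A point of `ℙⁿ` over `k`, realized as the projectivization of `k^(n+1)`. -/
abbrev ProjSpace (k : Type*) [Field k] (n : ℕ) : Type _ :=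
  Projectivization k (Fin (n + 1) → k)

/-- The projective linear subspace of `ℙⁿ` determined by a linear subspace
`W ⊆ k^(n+1)`, as a set of points. -/
def projSet {k : Type*} [Field k] {n : ℕ} (W : Submodule k (Fin (n + 1) → k)) :
    Set (ProjSpace k n) :=
  {x | x.rep ∈ W}

/-- The Cayley–Bacharach condition `CB(r)`: every homogeneous polynomial of degree `r`
vanishing at all points of `Γ` except possibly one vanishes on all of `Γ`. -/
def IsCB {k : Type*} [Field k] {n : ℕ} (r : ℕ) (Γ : Set (ProjSpace k n)) : Prop :=
  ∀ F : MvPolynomial (Fin (n + 1)) k, F.IsHomogeneous r →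
    ∀ x ∈ Γ, (∀ y ∈ Γ, y ≠ x → MvPolynomial.eval y.rep F = 0) →
      MvPolynomial.eval x.rep F = 0

/-- A plane configuration in `ℙⁿ`: a finite collection of distinct
positive-dimensional projective linear subspaces. -/
structure PlaneConfig (k : Type*) [Field k] (n : ℕ) where
  length : ℕ
  P : Fin length → Submodule k (Fin (n + 1) → k)
  inj : Function.Injective P
  posdim : ∀ i, 2 ≤ Module.finrank k (P i)

namespace PlaneConfig

variable {k : Type*} [Field k] {n : ℕ}

/-- The dimension of a plane configuration: the sum of the (projective) dimensions
of its planes. -/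
noncomputable def dim (C : PlaneConfig k n) : ℕ := ∑ i, (Module.finrank k (C.P i) - 1)

/-- The set of points of `ℙⁿ` lying on the configuration. -/
def points (C : PlaneConfig k n) : Set (ProjSpace k n) := ⋃ i, projSet (C.P i)

/-- A configuration is skew if its planes are pairwise (projectively) disjoint. -/
def Skew (C : PlaneConfig k n) : Prop := ∀ i j, i ≠ j → C.P i ⊓ C.P j = ⊥

end PlaneConfig

/-!
Fix `x ∈ Γ \ 𝒫`. For each plane `Pᵢ` choose a linear form vanishing on `Pᵢ` but not at `x`; their
product `H` has degree `ℓ`, vanishes on `𝒫` and not at `x`. If `F` of degree `r - ℓ` vanishes on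
`(Γ \ 𝒫) \ {x}`, then `F * H` has degree `r` and vanishes on `Γ \ {x}`, so `CB(r)` gives
`F(x) H(x) = 0`, hence `F(x) = 0`.
-/

section LinearForms

variable {k σ : Type*} [Field k] [Fintype σ]

theorem exists_isHomogeneous_one_eval_eq_zero_of_notMem {W : Submodule k (σ → k)} {v : σ → k}
    (hv : v ∉ W) :
    ∃ L : MvPolynomial σ k, L.IsHomogeneous 1 ∧ (∀ u ∈ W, eval u L = 0) ∧ eval v L ≠ 0 := by
  classical
  obtain ⟨f, hfv, hfW⟩ := W.exists_dual_map_eq_bot_of_notMem hv inferInstance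
  obtain ⟨w, rfl⟩ := (dotProductEquiv k σ).surjective f
  let L := (Matrix.replicateRow Unit w).toMvPolynomial ()
  have heval (u : σ → k) : eval u L = w ⬝ᵥ u := by
    rw [Matrix.toMvPolynomial_eval_eq_apply, Matrix.replicateRow_mulVec_eq_const]
    rfl
  refine ⟨L, Matrix.toMvPolynomial_isHomogeneous _ _, fun u hu => ?_, by rwa [heval]⟩
  rw [heval, ← Submodule.mem_bot k, ← hfW]
  exact Submodule.mem_map_of_mem hu

theorem exists_isHomogeneous_eval_eq_zero_of_forall_notMem {ι : Type*} [Fintype ι]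
    {W : ι → Submodule k (σ → k)} {v : σ → k} (hv : ∀ i, v ∉ W i) :
    ∃ H : MvPolynomial σ k, H.IsHomogeneous (Fintype.card ι) ∧
      (∀ i, ∀ u ∈ W i, eval u H = 0) ∧ eval v H ≠ 0 := by
  choose L hL hLW hLv using fun i => exists_isHomogeneous_one_eval_eq_zero_of_notMem (hv i)
  refine ⟨∏ i, L i, ?_, fun i u hu => ?_, ?_⟩
  · simpa using IsHomogeneous.prod Finset.univ L (fun _ => 1) fun i _ => hL i
  · rw [map_prod]
    exact Finset.prod_eq_zero (Finset.mem_univ i) (hLW i u hu)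
  · rw [map_prod]
    exact Finset.prod_ne_zero_iff.mpr fun i _ => hLv i

end LinearForms

section CayleyBacharach

variable {k : Type*} [Field k] {n : ℕ}

theorem IsCB.diff {r d : ℕ} {Γ S : Set (ProjSpace k n)} (hΓ : IsCB (r + d) Γ)
    (hS : ∀ x ∈ Γ \ S, ∃ H : MvPolynomial (Fin (n + 1)) k, H.IsHomogeneous d ∧
      (∀ y ∈ S, eval y.rep H = 0) ∧ eval x.rep H ≠ 0) :
    IsCB r (Γ \ S) := by
  intro F hF x hx hFx
  obtain ⟨H, hHd, hHS, hHx⟩ := hS x hx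
  have hFHx : eval x.rep (F * H) = 0 := by
    refine hΓ _ (hF.mul hHd) x hx.1 fun y hy hyx => ?_
    by_cases hyS : y ∈ S
    · rw [map_mul, hHS y hyS, mul_zero]
    · rw [map_mul, hFx y ⟨hy, hyS⟩ hyx, zero_mul]
  rwa [map_mul, mul_eq_zero, or_iff_left hHx] at hFHx

theorem PlaneConfig.exists_isHomogeneous_eval_eq_zero_of_notMem_points (C : PlaneConfig k n)
    {x : ProjSpace k n} (hx : x ∉ C.points) :
    ∃ H : MvPolynomial (Fin (n + 1)) k, H.IsHomogeneous C.length ∧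
      (∀ y ∈ C.points, eval y.rep H = 0) ∧ eval x.rep H ≠ 0 := by
  obtain ⟨H, hH, hHP, hHx⟩ := exists_isHomogeneous_eval_eq_zero_of_forall_notMem
    (W := C.P) fun i hi => hx (Set.mem_iUnion.mpr ⟨i, hi⟩)
  refine ⟨H, by simpa using hH, fun y hy => ?_, hHx⟩
  obtain ⟨i, hi⟩ := Set.mem_iUnion.mp hy
  exact hHP i _ hi

end CayleyBacharach

theorem excision_general {k : Type*} [Field k] {n : ℕ} (r : ℕ)
    (Γ : Set (ProjSpace k n)) (hCB : IsCB r Γ)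
    (C : PlaneConfig k n) (hlen : C.length ≤ r) :
    IsCB (r - C.length) (Γ \ C.points) := by
  rw [← Nat.sub_add_cancel hlen] at hCB
  exact hCB.diff fun x hx => C.exists_isHomogeneous_eval_eq_zero_of_notMem_points hx.2

/-- Excision property: if `Γ` satisfies `CB(r)` and `C` is a plane configuration of
length `ℓ ≤ r`, then `Γ \ C` satisfies `CB(r - ℓ)`. -/
theorem excision {k : Type*} [Field k] [Infinite k] {n : ℕ} (r : ℕ)
    (Γ : Set (ProjSpace k n)) (hfin : Γ.Finite) (hCB : IsCB r Γ)
    (C : PlaneConfig k n) (hlen : C.length ≤ r) :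
    IsCB (r - C.length) (Γ \ C.points) :=
  excision_general r Γ hCB C hlen
end

section
/- Let P₁ and P₂ be disjoint positive-dimensional projective linear subspaces of ℙⁿ, and let Γ ⊆ P₁ ∪ P₂ be a finite set. Let r ≥ 1. Then Γ satisfies CB(r) if and only if both Γ ∩ P₁ and Γ ∩ P₂ satisfy CB(r). -/
open MvPolynomial

theorem Submodule.exists_linearMap_eq_self_of_mem_left_eq_zero_of_mem_right {K V : Type*}
    [DivisionRing K] [AddCommGroup V] [Module K V] {P₁ P₂ : Submodule K V}
    (h : Disjoint P₁ P₂) :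
    ∃ π : V →ₗ[K] V, (∀ v ∈ P₁, π v = v) ∧ ∀ v ∈ P₂, π v = 0 := by
  obtain ⟨Q, hP₂Q, hQ⟩ := h.symm.exists_isCompl
  exact ⟨P₁.projection Q hQ.symm, fun v hv => projection_apply_of_mem_left _ hv,
    fun v hv => projection_apply_of_mem_right _ (hP₂Q hv)⟩

namespace MvPolynomial

variable {R σ τ : Type*} [CommSemiring R] [Fintype τ] [DecidableEq τ]

noncomputable def compLinearMap (F : MvPolynomial σ R) (π : (τ → R) →ₗ[R] σ → R) :
    MvPolynomial τ R :=
  bind₁ (fun i => ∑ j, C (π (Pi.single j 1) i) * X j) F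

theorem eval_compLinearMap (F : MvPolynomial σ R) (π : (τ → R) →ₗ[R] σ → R) (v : τ → R) :
    eval v (F.compLinearMap π) = eval (π v) F := by
  have hC : (eval v).comp C = RingHom.id R := RingHom.ext (eval_C ·)
  have hπ : (fun i => eval v (∑ j, C (π (Pi.single j 1) i) * X j)) = π v := by
    conv_rhs => rw [pi_eq_sum_univ' v]
    ext i
    simp [mul_comm]
  rw [MvPolynomial.compLinearMap, hom_bind₁, hC, coe_eval₂Hom, eval₂_id, hπ]

theorem IsHomogeneous.compLinearMap {F : MvPolynomial σ R} {r : ℕ} (hF : F.IsHomogeneous r)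
    (π : (τ → R) →ₗ[R] σ → R) : (F.compLinearMap π).IsHomogeneous r := by
  have h := hF.aeval (fun i => ∑ j, C (π (Pi.single j 1) i) * X j) fun i =>
    IsHomogeneous.sum _ _ 1 fun j _ => isHomogeneous_C_mul_X _ j
  rwa [one_mul] at h

theorem IsHomogeneous.eval_zero {F : MvPolynomial σ R} {r : ℕ} (hF : F.IsHomogeneous r)
    (hr : r ≠ 0) : eval 0 F = 0 := by
  rw [MvPolynomial.eval_zero, constantCoeff_eq]
  exact hF.coeff_eq_zero (by simpa using hr.symm)

end MvPolynomial

section CayleyBacharach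

variable {k : Type*} [Field k] {n r : ℕ} {Γ : Set (ProjSpace k n)}

theorem isCB_of_subset_union {A B : Set (ProjSpace k n)} (hΓ : Γ ⊆ A ∪ B)
    (hA : IsCB r (Γ ∩ A)) (hB : IsCB r (Γ ∩ B)) : IsCB r Γ := by
  intro F hF x hx hvan
  rcases hΓ hx with hxA | hxB
  · exact hA F hF x ⟨hx, hxA⟩ fun y hy => hvan y hy.1
  · exact hB F hF x ⟨hx, hxB⟩ fun y hy => hvan y hy.1

/-- Pull a form back along a projection onto `P₁` whose kernel contains `P₂`: it keeps its values
on `P₁` and, having positive degree, vanishes on `P₂`. -/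
theorem IsCB.inter_projSet (hΓ : IsCB r Γ) (hr : r ≠ 0) {P₁ P₂ : Submodule k (Fin (n + 1) → k)}
    (hdisj : Disjoint P₁ P₂) (hsub : Γ ⊆ projSet P₁ ∪ projSet P₂) :
    IsCB r (Γ ∩ projSet P₁) := by
  intro F hF x hx hvan
  obtain ⟨π, hπ₁, hπ₂⟩ :=
    Submodule.exists_linearMap_eq_self_of_mem_left_eq_zero_of_mem_right hdisj
  have hG₁ : ∀ y ∈ projSet P₁, eval y.rep (F.compLinearMap π) = eval y.rep F := fun y hy => by
    rw [eval_compLinearMap, hπ₁ _ hy]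
  have hG₂ : ∀ y ∈ projSet P₂, eval y.rep (F.compLinearMap π) = 0 := fun y hy => by
    rw [eval_compLinearMap, hπ₂ _ hy, hF.eval_zero hr]
  rw [← hG₁ x hx.2]
  refine hΓ _ (hF.compLinearMap π) x hx.1 fun y hy hyx => ?_
  rcases hsub hy with hy₁ | hy₂
  · rw [hG₁ y hy₁]
    exact hvan y ⟨hy, hy₁⟩ hyx
  · exact hG₂ y hy₂

end CayleyBacharach

theorem disjoint_planes_general {k : Type*} [Field k] {n : ℕ} (r : ℕ) (hr : 1 ≤ r)
    (P₁ P₂ : Submodule k (Fin (n + 1) → k))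
    (hdisj : P₁ ⊓ P₂ = ⊥)
    (Γ : Set (ProjSpace k n))
    (hsub : Γ ⊆ projSet P₁ ∪ projSet P₂) :
    IsCB r Γ ↔ (IsCB r (Γ ∩ projSet P₁) ∧ IsCB r (Γ ∩ projSet P₂)) := by
  replace hdisj : Disjoint P₁ P₂ := disjoint_iff.mpr hdisj
  replace hr : r ≠ 0 := Nat.one_le_iff_ne_zero.mp hr
  refine ⟨fun hΓ => ⟨hΓ.inter_projSet hr hdisj hsub, ?_⟩,
    fun ⟨h₁, h₂⟩ => isCB_of_subset_union hsub h₁ h₂⟩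
  exact hΓ.inter_projSet hr hdisj.symm (hsub.trans (Set.union_comm _ _).le)

/-- For `Γ` contained in a union of two disjoint positive-dimensional linear subspaces,
`Γ` is `CB(r)` iff both parts are `CB(r)` (for `r ≥ 1`). -/
theorem disjoint_planes {k : Type*} [Field k] [Infinite k] {n : ℕ} (r : ℕ) (hr : 1 ≤ r)
    (P₁ P₂ : Submodule k (Fin (n + 1) → k))
    (h1 : 2 ≤ Module.finrank k P₁) (h2 : 2 ≤ Module.finrank k P₂)
    (hdisj : P₁ ⊓ P₂ = ⊥)
    (Γ : Set (ProjSpace k n)) (hfin : Γ.Finite)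
    (hsub : Γ ⊆ projSet P₁ ∪ projSet P₂) :
    IsCB r Γ ↔ (IsCB r (Γ ∩ projSet P₁) ∧ IsCB r (Γ ∩ projSet P₂)) :=
  disjoint_planes_general r hr P₁ P₂ hdisj Γ hsub
end

section
/- Disjoint planes case: Fix integers r ≥ 1 and d ≥ 1, and assume the Cayley–Bacharach covering property holds for (r, d') for every 0 ≤ d' ≤ d − 1. Let Γ ⊆ ℙⁿ be a finite set satisfying CB(r) with |Γ| ≤ (d+1)r + 1. Let A, B ⊆ ℙⁿ be disjoint positive-dimensional projective linear subspaces with Γ ⊆ A ∪ B and with Γ ∩ A and Γ ∩ B both nonempty. Then Γ lies on a plane configuration of dimension at most d. -/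
/-!
Split `Γ` into `Γ ∩ A` and `Γ ∩ B`. Pulling a form of degree `r ≥ 1` back along a linear
projection onto `A` that kills `B` leaves it unchanged on `A` and makes it vanish on `B`, so each
half is again `CB(r)`; a product of linear forms, one through each other point of the half and a
power of one containing the other plane, shows that each half has more than `r` points.
With `a = |Γ ∩ A|` and `b = |Γ ∩ B|`, the covering property for `(a - 2) / r < d` and
`(b - 2) / r < d` puts the halves on configurations of these dimensions, whose sum is at most `d`
because `a + b ≤ (d + 1) r + 1`; their union covers `Γ`.
-/

open MvPolynomial

/-- The Cayley--Bacharach covering property for parameters `(r, d)`: every finite set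
in any projective space satisfying `CB(r)` with at most `(d+1)r + 1` points lies on a
plane configuration of dimension at most `d`. -/
def CBCoverProp (k : Type*) [Field k] (r d : ℕ) : Prop :=
  ∀ (m : ℕ) (Γ : Set (ProjSpace k m)), Γ.Finite → IsCB r Γ →
    Γ.ncard ≤ (d + 1) * r + 1 →
    ∃ C : PlaneConfig k m, C.dim ≤ d ∧ Γ ⊆ C.points

namespace MvPolynomial

variable {σ K : Type*} [Fintype σ] [DecidableEq σ] [Field K]

noncomputable def ofLinearForm (f : (σ → K) →ₗ[K] K) : MvPolynomial σ K :=
  ∑ i, C (f fun j => if i = j then 1 else 0) * X i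

theorem isHomogeneous_ofLinearForm (f : (σ → K) →ₗ[K] K) : (ofLinearForm f).IsHomogeneous 1 :=
  IsHomogeneous.sum _ _ _ fun i _ => isHomogeneous_C_mul_X _ i

@[simp]
theorem eval_ofLinearForm (f : (σ → K) →ₗ[K] K) (v : σ → K) : eval v (ofLinearForm f) = f v := by
  simp [ofLinearForm, f.pi_apply_eq_sum_univ v, mul_comm]

noncomputable def linearSubst (φ : (σ → K) →ₗ[K] (σ → K)) (F : MvPolynomial σ K) :
    MvPolynomial σ K :=
  bind₁ (fun i => ofLinearForm (LinearMap.proj i ∘ₗ φ)) F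

theorem IsHomogeneous.linearSubst {F : MvPolynomial σ K} {r : ℕ} (hF : F.IsHomogeneous r)
    (φ : (σ → K) →ₗ[K] (σ → K)) : (linearSubst φ F).IsHomogeneous r := by
  simpa [MvPolynomial.linearSubst, ← aeval_eq_bind₁] using
    hF.aeval _ fun i => isHomogeneous_ofLinearForm _

@[simp]
theorem eval_linearSubst (φ : (σ → K) →ₗ[K] (σ → K)) (F : MvPolynomial σ K) (v : σ → K) :
    eval v (linearSubst φ F) = eval (φ v) F := by
  rw [linearSubst, eval, eval₂Hom_bind₁]
  congr
  ext i
  exact eval_ofLinearForm _ v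

end MvPolynomial

theorem MvPolynomial.IsHomogeneous.eval_zero_s5 {σ R : Type*} [CommSemiring R]
    {F : MvPolynomial σ R} {r : ℕ} (hF : F.IsHomogeneous r) (hr : r ≠ 0) : eval 0 F = 0 := by
  simpa [← constantCoeff_eq] using hF.coeff_eq_zero (d := 0) (by simpa using hr.symm)

section Projective

variable {k : Type*} [Field k] {n : ℕ}

theorem disjoint_projSet {A B : Submodule k (Fin (n + 1) → k)} (h : Disjoint A B) :
    Disjoint (projSet A) (projSet B) :=
  Set.disjoint_left.mpr fun x hA hB => x.rep_nonzero (Submodule.disjoint_def.mp h _ hA hB)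

theorem exists_linearForm_apply_eq_zero_ne_zero {x y : ProjSpace k n} (hxy : x ≠ y) :
    ∃ f : (Fin (n + 1) → k) →ₗ[k] k, f y.rep = 0 ∧ f x.rep ≠ 0 := by
  have hx : x.rep ∉ k ∙ y.rep := by
    intro h
    obtain ⟨c, hc⟩ := Submodule.mem_span_singleton.mp h
    refine hxy ?_
    rw [← x.mk_rep, ← y.mk_rep, Projectivization.mk_eq_mk_iff']
    exact ⟨c, hc⟩
  obtain ⟨f, hfx, hfy⟩ := Submodule.exists_le_ker_of_notMem hx
  exact ⟨f, hfy (Submodule.mem_span_singleton_self _), hfx⟩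

theorem exists_isHomogeneous_eval_ne_zero_of_card_lt {r : ℕ} {x : ProjSpace k n}
    {S : Finset (ProjSpace k n)} (hxS : x ∉ S) (hSr : S.card < r)
    {W : Submodule k (Fin (n + 1) → k)} (hxW : x.rep ∉ W) :
    ∃ F : MvPolynomial (Fin (n + 1)) k, F.IsHomogeneous r ∧ eval x.rep F ≠ 0 ∧
      (∀ y ∈ S, eval y.rep F = 0) ∧ ∀ v ∈ W, eval v F = 0 := by
  choose! f hfy hfx using fun y (hy : y ∈ S) =>
    exists_linearForm_apply_eq_zero_ne_zero (ne_of_mem_of_not_mem hy hxS).symm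
  obtain ⟨g, hgx, hgW⟩ := W.exists_le_ker_of_notMem hxW
  refine ⟨(∏ y ∈ S, ofLinearForm (f y)) * ofLinearForm g ^ (r - S.card), ?_, ?_, ?_, ?_⟩
  · convert (IsHomogeneous.prod S _ _ fun y _ => isHomogeneous_ofLinearForm (f y)).mul
      ((isHomogeneous_ofLinearForm g).pow (r - S.card)) using 1
    simp only [Finset.sum_const, smul_eq_mul, mul_one, one_mul]
    omega
  · simpa [Finset.prod_eq_zero_iff, hgx] using hfx
  · exact fun y hy => by
      rw [map_mul, map_prod, Finset.prod_eq_zero hy (by simpa using hfy y hy), zero_mul]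
  · exact fun v hv => by simp [LinearMap.mem_ker.mp (hgW hv), Nat.sub_ne_zero_of_lt hSr]

end Projective

namespace IsCB

variable {k : Type*} [Field k] {n r : ℕ} {Γ : Set (ProjSpace k n)}
  {A B : Submodule k (Fin (n + 1) → k)}

theorem inter_projSet_s5 (hr : r ≠ 0) (hCB : IsCB r Γ) (hAB : Disjoint A B)
    (hsub : Γ ⊆ projSet A ∪ projSet B) : IsCB r (Γ ∩ projSet A) := by
  intro F hF x hx hvan
  obtain ⟨B', hBB', hcompl⟩ := hAB.symm.exists_isCompl
  set φ := A.projection B' hcompl.symm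
  have hφA : ∀ v ∈ A, φ v = v := fun v hv => Submodule.projection_apply_of_mem_left _ hv
  have hφB : ∀ v ∈ B, φ v = 0 := fun v hv => Submodule.projection_apply_of_mem_right _ (hBB' hv)
  have hφF := hCB (linearSubst φ F) (hF.linearSubst φ) x hx.1 fun y hy hyx => by
    rw [eval_linearSubst]
    rcases hsub hy with hyA | hyB
    · rw [hφA _ hyA]
      exact hvan y ⟨hy, hyA⟩ hyx
    · rw [hφB _ hyB]
      exact hF.eval_zero_s5 hr
  rwa [eval_linearSubst, hφA _ hx.2] at hφF

theorem lt_ncard_inter (hCB : IsCB r Γ) (hfin : Γ.Finite) (hAB : Disjoint A B)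
    (hsub : Γ ⊆ projSet A ∪ projSet B) (hne : (Γ ∩ projSet A).Nonempty) :
    r < (Γ ∩ projSet A).ncard := by
  obtain ⟨x, hx⟩ := hne
  by_contra! hle
  have hfinx : ((Γ ∩ projSet A) \ {x}).Finite := (hfin.inter_of_left _).sdiff
  have hSr : hfinx.toFinset.card < r := by
    rw [← Set.ncard_eq_toFinset_card _ hfinx]
    exact (Set.ncard_sdiff_singleton_lt_of_mem hx (hfin.inter_of_left _)).trans_le hle
  obtain ⟨F, hF, hFx, hFS, hFB⟩ := exists_isHomogeneous_eval_ne_zero_of_card_lt (by simp) hSr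
    ((disjoint_projSet hAB).notMem_of_mem_left hx.2)
  refine hFx (hCB F hF x hx.1 fun y hy hyx => ?_)
  rcases hsub hy with hyA | hyB
  · exact hFS y (by simpa using ⟨⟨hy, hyA⟩, hyx⟩)
  · exact hFB _ hyB

end IsCB

namespace PlaneConfig

variable {k : Type*} [Field k] {n : ℕ}

noncomputable def ofFinset (S : Finset (Submodule k (Fin (n + 1) → k)))
    (hS : ∀ W ∈ S, 2 ≤ Module.finrank k W) : PlaneConfig k n where
  length := S.card
  P i := S.equivFin.symm i
  inj := Subtype.val_injective.comp S.equivFin.symm.injective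
  posdim i := hS _ (S.equivFin.symm i).2

theorem dim_ofFinset (S : Finset (Submodule k (Fin (n + 1) → k)))
    (hS : ∀ W ∈ S, 2 ≤ Module.finrank k W) :
    (ofFinset S hS).dim = ∑ W ∈ S, (Module.finrank k W - 1) := by
  rw [← Finset.sum_coe_sort S, ← S.equivFin.symm.sum_comp]
  rfl

theorem points_ofFinset (S : Finset (Submodule k (Fin (n + 1) → k)))
    (hS : ∀ W ∈ S, 2 ≤ Module.finrank k W) :
    (ofFinset S hS).points = ⋃ W ∈ S, projSet W := by
  show ⋃ i, projSet ((S.equivFin.symm i : S) : Submodule k (Fin (n + 1) → k)) = _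
  rw [S.equivFin.symm.surjective.iUnion_comp fun W : S => projSet W.1]
  exact Set.iUnion_subtype (· ∈ S) _

noncomputable def planes (C : PlaneConfig k n) : Finset (Submodule k (Fin (n + 1) → k)) :=
  Finset.univ.image C.P

theorem dim_eq_sum_planes (C : PlaneConfig k n) :
    C.dim = ∑ W ∈ C.planes, (Module.finrank k W - 1) := by
  rw [planes, Finset.sum_image fun _ _ _ _ h => C.inj h]
  rfl

theorem points_eq_biUnion_planes (C : PlaneConfig k n) :
    C.points = ⋃ W ∈ C.planes, projSet W := by
  simp [points, planes]

theorem posdim_of_mem_planes {C : PlaneConfig k n} {W : Submodule k (Fin (n + 1) → k)}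
    (hW : W ∈ C.planes) : 2 ≤ Module.finrank k W := by
  obtain ⟨i, -, rfl⟩ := Finset.mem_image.mp hW
  exact C.posdim i

noncomputable def union (C D : PlaneConfig k n) : PlaneConfig k n :=
  ofFinset (C.planes ∪ D.planes) fun _ hW =>
    (Finset.mem_union.mp hW).elim posdim_of_mem_planes posdim_of_mem_planes

theorem dim_union_le (C D : PlaneConfig k n) : (C.union D).dim ≤ C.dim + D.dim := by
  rw [union, dim_ofFinset, dim_eq_sum_planes C, dim_eq_sum_planes D, ← Finset.sum_union_inter]
  exact Nat.le_add_right _ _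

theorem points_union (C D : PlaneConfig k n) : (C.union D).points = C.points ∪ D.points := by
  rw [union, points_ofFinset, points_eq_biUnion_planes C, points_eq_biUnion_planes D,
    Finset.set_biUnion_union]

end PlaneConfig

theorem Nat.sub_two_div_add_sub_two_div_le {a b r d : ℕ} (hr : 0 < r)
    (h : a + b ≤ (d + 1) * r + 1) : (a - 2) / r + (b - 2) / r ≤ d := by
  have hpos : 0 < (d + 1) * r := by positivity
  have hlt : (a - 2 + (b - 2)) / r < d + 1 := (Nat.div_lt_iff_lt_mul hr).mpr (by omega)
  exact Nat.div_add_div_le_add_div.trans (Nat.lt_add_one_iff.mp hlt)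

variable {k : Type*} [Field k] in
/-- `(a - 2) / r` is the least `d'` with `a ≤ (d' + 1) r + 1`. -/
theorem exists_planeConfig_dim_le_of_cover {r d m : ℕ} (hr : 0 < r) (hd : 0 < d)
    (hcover : ∀ d' < d, CBCoverProp k r d') {Γ : Set (ProjSpace k m)} (hfin : Γ.Finite)
    (hCB : IsCB r Γ) (hcard : Γ.ncard ≤ d * r + 1) :
    ∃ C : PlaneConfig k m, C.dim ≤ (Γ.ncard - 2) / r ∧ Γ ⊆ C.points := by
  refine hcover _ ((Nat.div_lt_iff_lt_mul hr).mpr ?_) m Γ hfin hCB ?_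
  · have := Nat.mul_pos hd hr
    omega
  · have := Nat.lt_div_mul_add (a := Γ.ncard - 2) hr
    rw [add_mul, one_mul]
    omega

theorem disjoint_planes_case_general {k : Type*} [Field k] {n : ℕ} (r d : ℕ)
    (hr : 1 ≤ r) (hd : 1 ≤ d) (hcover : ∀ d' < d, CBCoverProp k r d')
    (Γ : Set (ProjSpace k n)) (hfin : Γ.Finite) (hCB : IsCB r Γ)
    (hcard : Γ.ncard ≤ (d + 1) * r + 1)
    (A B : Submodule k (Fin (n + 1) → k))
    (hdisj : A ⊓ B = ⊥)
    (hsub : Γ ⊆ projSet A ∪ projSet B)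
    (hAne : (Γ ∩ projSet A).Nonempty) (hBne : (Γ ∩ projSet B).Nonempty) :
    ∃ C : PlaneConfig k n, C.dim ≤ d ∧ Γ ⊆ C.points := by
  have hr0 : r ≠ 0 := Nat.one_le_iff_ne_zero.mp hr
  have hAB : Disjoint A B := disjoint_iff.mpr hdisj
  have hsubBA : Γ ⊆ projSet B ∪ projSet A := by rwa [Set.union_comm] at hsub
  have hsplit : Γ = Γ ∩ projSet A ∪ Γ ∩ projSet B := by
    rw [← Set.inter_union_distrib_left, Set.inter_eq_left.mpr hsub]
  have hcardAB : (Γ ∩ projSet A).ncard + (Γ ∩ projSet B).ncard = Γ.ncard := by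
    conv_rhs => rw [hsplit]
    exact (Set.ncard_union_eq ((disjoint_projSet hAB).mono Set.inter_subset_right
      Set.inter_subset_right) (hfin.inter_of_left _) (hfin.inter_of_left _)).symm
  have hrA := hCB.lt_ncard_inter hfin hAB hsub hAne
  have hrB := hCB.lt_ncard_inter hfin hAB.symm hsubBA hBne
  obtain ⟨CA, hdimA, hΓA⟩ := exists_planeConfig_dim_le_of_cover hr hd hcover
    (hfin.inter_of_left _) (hCB.inter_projSet_s5 hr0 hAB hsub) (by nlinarith)
  obtain ⟨CB, hdimB, hΓB⟩ := exists_planeConfig_dim_le_of_cover hr hd hcover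
    (hfin.inter_of_left _) (hCB.inter_projSet_s5 hr0 hAB.symm hsubBA) (by nlinarith)
  refine ⟨CA.union CB, ?_, ?_⟩
  · calc (CA.union CB).dim ≤ CA.dim + CB.dim := CA.dim_union_le CB
      _ ≤ _ := add_le_add hdimA hdimB
      _ ≤ d := Nat.sub_two_div_add_sub_two_div_le hr (hcardAB ▸ hcard)
  · rw [hsplit, CA.points_union CB]
    exact Set.union_subset_union hΓA hΓB

/-- Disjoint planes case: assuming the covering property below dimension `d`, a `CB(r)` set
of at most `(d+1)r + 1` points lying on two disjoint positive-dimensional planes, meeting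
both, lies on a plane configuration of dimension at most `d`. -/
theorem disjoint_planes_case {k : Type*} [Field k] [Infinite k] {n : ℕ} (r d : ℕ)
    (hr : 1 ≤ r) (hd : 1 ≤ d) (hcover : ∀ d' < d, CBCoverProp k r d')
    (Γ : Set (ProjSpace k n)) (hfin : Γ.Finite) (hCB : IsCB r Γ)
    (hcard : Γ.ncard ≤ (d + 1) * r + 1)
    (A B : Submodule k (Fin (n + 1) → k))
    (hA : 2 ≤ Module.finrank k A) (hB : 2 ≤ Module.finrank k B)
    (hdisj : A ⊓ B = ⊥)
    (hsub : Γ ⊆ projSet A ∪ projSet B)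
    (hAne : (Γ ∩ projSet A).Nonempty) (hBne : (Γ ∩ projSet B).Nonempty) :
    ∃ C : PlaneConfig k n, C.dim ≤ d ∧ Γ ⊆ C.points :=
  disjoint_planes_case_general r d hr hd hcover Γ hfin hCB hcard A B hdisj hsub hAne hBne
end

section
/- Let A and B be positive-dimensional projective linear subspaces of ℙⁿ such that A ∩ B consists of a single point p and A and B together span ℙⁿ. Let Γ ⊆ A ∪ B be a finite set satisfying CB(r), and set Γ_A = (Γ ∩ A) \ {p}. Then at least one of the two sets Γ_A and Γ_A ∪ {p} satisfies CB(r). -/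
open MvPolynomial

/-!
Choose a linear projection `π` of `k^(n+1)` onto `A` that maps `B` into `A ∩ B`, the line `p`.
For a form `H` of degree `r`, the form `H ∘ π` agrees with `H` on `A` and equals `c ^ r H(p)`
at a point of `B`. So if `H(p) = 0`, applying `CB(r)` for `Γ` to `H ∘ π` shows that `H`
vanishing on `Γ ∩ A` minus one point forces it to vanish there too. This gives `CB(r)` for
`Γ_A ∪ {p}` at points other than `p`. At `p` itself, a form `F` witnessing the failure of
`CB(r)` for `Γ_A` at `x` is combined with `G` into `G(p) F - F(p) G`, which vanishes at `p`;
the same argument yields `G(p) F(x) = 0`.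
-/

open MvPolynomial

theorem IsModularLattice.exists_isCompl_and_le_inf_sup {α : Type*} [Lattice α] [BoundedOrder α]
    [IsModularLattice α] [ComplementedLattice α] (a b : α) :
    ∃ c, IsCompl a c ∧ b ≤ a ⊓ b ⊔ c := by
  obtain ⟨c₀, hdisj, hsup⟩ := exists_disjoint_and_sup_eq (inf_le_right : a ⊓ b ≤ b)
  have hc₀b : c₀ ≤ b := le_sup_right.trans hsup.le
  have hac₀ : Disjoint c₀ a := by
    rw [disjoint_comm, disjoint_iff, ← inf_eq_right.mpr hc₀b, ← inf_assoc]
    exact disjoint_iff.mp hdisj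
  obtain ⟨c, hc₀c, hc⟩ := hac₀.exists_isCompl
  exact ⟨c, hc.symm, hsup.ge.trans (sup_le_sup_left hc₀c _)⟩

theorem Submodule.exists_linearMap_eq_self_on_and_mapsTo_inf {K V : Type*} [DivisionRing K]
    [AddCommGroup V] [Module K V] (A B : Submodule K V) :
    ∃ π : V →ₗ[K] V, (∀ x ∈ A, π x = x) ∧ ∀ b ∈ B, π b ∈ A ⊓ B := by
  obtain ⟨C, hC, hBC⟩ := IsModularLattice.exists_isCompl_and_le_inf_sup A B
  refine ⟨A.projection C hC, fun x hx => projection_apply_of_mem_left hC hx, fun b hb => ?_⟩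
  obtain ⟨y, hy, z, hz, rfl⟩ := mem_sup.mp (hBC hb)
  rwa [map_add, projection_apply_of_mem_left hC hy.1, projection_apply_of_mem_right hC hz,
    add_zero]

namespace MvPolynomial.IsHomogeneous

variable {R σ : Type*} [CommRing R] {r : ℕ} {F : MvPolynomial σ R}

theorem eval_smul (hF : F.IsHomogeneous r) (c : R) (v : σ → R) :
    eval (c • v) F = c ^ r * eval v F := by
  rw [eval_eq, eval_eq, Finset.mul_sum]
  refine Finset.sum_congr rfl fun d hd => ?_
  have hdeg : d.degree = r := by
    simpa [Pi.one_def, ← Finsupp.degree_eq_weight_one] using hF (mem_support_iff.mp hd)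
  simp only [Pi.smul_apply, smul_eq_mul, mul_pow, Finset.prod_mul_distrib,
    Finset.prod_pow_eq_pow_sum, ← Finsupp.degree_apply, hdeg]
  ring

theorem eval_eq_zero_of_mem_span_singleton (hF : F.IsHomogeneous r) {v w : σ → R}
    (hv : v ∈ Submodule.span R {w}) (hw : eval w F = 0) : eval v F = 0 := by
  obtain ⟨c, rfl⟩ := Submodule.mem_span_singleton.mp hv
  rw [hF.eval_smul, hw, mul_zero]

theorem exists_eval_eq_eval_comp [Fintype σ] {τ : Type*} [Fintype τ]
    (hF : F.IsHomogeneous r) (π : (τ → R) →ₗ[R] (σ → R)) :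
    ∃ G : MvPolynomial τ R, G.IsHomogeneous r ∧ ∀ v, eval v G = eval (π v) F := by
  classical
  refine ⟨bind₁ (LinearMap.toMatrix' π).toMvPolynomial F,
    one_mul r ▸ hF.aeval _ (Matrix.toMvPolynomial_isHomogeneous _), fun v => ?_⟩
  simpa only [aeval_eq_eval, Matrix.toMvPolynomial_eval_eq_apply, LinearMap.toMatrix'_mulVec]
    using aeval_bind₁ v (LinearMap.toMatrix' π).toMvPolynomial F

end MvPolynomial.IsHomogeneous

section

variable {k : Type*} [Field k] {n : ℕ}

theorem le_span_rep_of_projSet_subset_singleton {W : Submodule k (Fin (n + 1) → k)}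
    {p : ProjSpace k n} (hW : projSet W ⊆ {p}) : W ≤ Submodule.span k {p.rep} := by
  intro w hw
  rcases eq_or_ne w 0 with rfl | hw0
  · exact zero_mem _
  obtain ⟨a, ha⟩ := Projectivization.exists_smul_eq_mk_rep k w hw0
  have hmk : Projectivization.mk k w hw0 = p := hW (show _ ∈ W from ha ▸ W.smul_mem _ hw)
  refine Submodule.mem_span_singleton.mpr ⟨(a : k)⁻¹, ?_⟩
  rw [← hmk, ← ha, Units.smul_def, inv_smul_smul₀ a.ne_zero]

theorem IsCB.eval_eq_zero_of_forall_projSet {r : ℕ} {A B : Submodule k (Fin (n + 1) → k)}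
    {p : ProjSpace k n} (hp : projSet A ∩ projSet B = {p}) {Γ : Set (ProjSpace k n)}
    (hsub : Γ ⊆ projSet A ∪ projSet B) (hCB : IsCB r Γ) {H : MvPolynomial (Fin (n + 1)) k}
    (hH : H.IsHomogeneous r) (hHp : eval p.rep H = 0) {x : ProjSpace k n} (hx : x ∈ Γ)
    (hxA : x ∈ projSet A) (hvan : ∀ y ∈ Γ, y ∈ projSet A → y ≠ x → eval y.rep H = 0) :
    eval x.rep H = 0 := by
  obtain ⟨π, hπA, hπB⟩ := Submodule.exists_linearMap_eq_self_on_and_mapsTo_inf A B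
  have hABp : A ⊓ B ≤ Submodule.span k {p.rep} := le_span_rep_of_projSet_subset_singleton hp.le
  obtain ⟨G, hG, hGπ⟩ := hH.exists_eval_eq_eval_comp π
  rw [← hπA _ hxA, ← hGπ]
  refine hCB G hG x hx fun y hy hyx => ?_
  rw [hGπ]
  rcases hsub hy with hyA | hyB
  · rw [hπA _ hyA]
    exact hvan y hy hyA hyx
  · exact hH.eval_eq_zero_of_mem_span_singleton (hABp (hπB _ hyB)) hHp

end

theorem union_two_at_point_1_general {k : Type*} [Field k] {n : ℕ} (r : ℕ)
    (A B : Submodule k (Fin (n + 1) → k))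
    (p : ProjSpace k n) (hp : projSet A ∩ projSet B = {p})
    (Γ : Set (ProjSpace k n))
    (hsub : Γ ⊆ projSet A ∪ projSet B) (hCB : IsCB r Γ) :
    IsCB r ((Γ ∩ projSet A) \ {p}) ∨ IsCB r (((Γ ∩ projSet A) \ {p}) ∪ {p}) := by
  refine or_iff_not_imp_left.mpr fun hΓA G hG z hz hGz => ?_
  have hGΓA : ∀ y ∈ (Γ ∩ projSet A) \ {p}, y ≠ z → eval y.rep G = 0 :=
    fun y hy => hGz y (Or.inl hy)
  rcases eq_or_ne p z with rfl | hpz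
  · simp only [IsCB, not_forall, exists_prop] at hΓA
    obtain ⟨F, hF, x, hx, hFx, hFx0⟩ := hΓA
    set H := C (eval p.rep G) * F - C (eval p.rep F) * G
    have hHx : eval x.rep H = 0 := by
      refine hCB.eval_eq_zero_of_forall_projSet hp hsub ((hF.C_mul _).sub (hG.C_mul _))
        (by simp [mul_comm]) hx.1.1 hx.1.2 fun y hy hyA hyx => ?_
      rcases eq_or_ne y p with rfl | hyp
      · simp [mul_comm]
      · simp [hFx y ⟨⟨hy, hyA⟩, hyp⟩ hyx, hGΓA y ⟨⟨hy, hyA⟩, hyp⟩ hyp]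
    simpa [H, hGΓA x hx hx.2, hFx0] using hHx
  · have hzΓA : z ∈ (Γ ∩ projSet A) \ {p} := hz.resolve_right hpz.symm
    have hGp : eval p.rep G = 0 := hGz p (Or.inr rfl) hpz
    refine hCB.eval_eq_zero_of_forall_projSet hp hsub hG hGp hzΓA.1.1 hzΓA.1.2
      fun y hy hyA hyz => ?_
    rcases eq_or_ne y p with rfl | hyp
    exacts [hGp, hGΓA y ⟨⟨hy, hyA⟩, hyp⟩ hyz]

/-- Two planes meeting at a point, part 1: at least one of `Γ_A` and `Γ_A ∪ {p}`
satisfies `CB(r)`. -/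
theorem union_two_at_point_1 {k : Type*} [Field k] [Infinite k] {n : ℕ} (r : ℕ)
    (A B : Submodule k (Fin (n + 1) → k))
    (hA : 2 ≤ Module.finrank k A) (hB : 2 ≤ Module.finrank k B)
    (p : ProjSpace k n) (hp : projSet A ∩ projSet B = {p})
    (hspan : A ⊔ B = ⊤)
    (Γ : Set (ProjSpace k n)) (hfin : Γ.Finite)
    (hsub : Γ ⊆ projSet A ∪ projSet B) (hCB : IsCB r Γ) :
    IsCB r ((Γ ∩ projSet A) \ {p}) ∨ IsCB r (((Γ ∩ projSet A) \ {p}) ∪ {p}) :=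
  union_two_at_point_1_general r A B p hp Γ hsub hCB
end

section
/- Balancing proposition: Suppose Γ ⊆ ℙⁿ is a finite set satisfying CB(r) that is contained in a skew plane configuration 𝒫 = P₁ ∪ … ∪ P_k with Γ ∩ Pᵢ nonempty for all i. Then one of the following holds: (i) each plane Pᵢ contains at least max(ℓ(𝒫), r + 2) points of Γ; or (ii) some plane Pᵢ contains fewer than ℓ(𝒫) points of Γ, and moreover ℓ(𝒫) ≥ r + 2. -/
open MvPolynomial

/-!
If a plane `Pᵢ` carried at most `r + 1` points of `Γ` while `ℓ(𝒫) ≤ r + 1`, pick `x ∈ Γ ∩ Pᵢ`.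
The at most `r` remaining points of `Γ ∩ Pᵢ` and the at most `r` other planes can be paired off,
and by skewness each span `Pⱼ + ⟨y⟩` of a pair misses `x`. A product of `r` linear forms, one
vanishing on each such span but not at `x`, then contradicts `CB(r)`. So every plane carries at
least `r + 2` points, or `ℓ(𝒫) ≥ r + 2`; the two alternatives follow by comparing with `ℓ(𝒫)`.
-/

open Set

theorem Set.Finite.exists_fin_range_cover {α : Type*} {s : Set α} (hs : s.Finite) {r : ℕ}
    (hr : s.ncard ≤ r) (d : α) : ∃ f : Fin r → α, s ⊆ range f ∧ range f ⊆ insert d s := by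
  have := hs.fintype
  obtain ⟨g⟩ : Nonempty (s ↪ Fin r) :=
    Function.Embedding.nonempty_of_card_le (by simpa [← Set.ncard_eq_toFinset_card'] using hr)
  refine ⟨Function.extend g Subtype.val fun _ => d, fun a ha => ⟨g ⟨a, ha⟩, ?_⟩, ?_⟩
  · exact g.injective.extend_apply _ _ _
  · refine (range_extend_subset _ _ _).trans ?_
    rintro _ (⟨a, rfl⟩ | ⟨_, _, rfl⟩)
    exacts [Or.inr a.2, Or.inl rfl]

theorem Submodule.notMem_sup_span_singleton {k V : Type*} [Field k] [AddCommGroup V] [Module k V]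
    {P Q : Submodule k V} (hPQ : P ⊓ Q = ⊥) {x y : V} (hx : x ∈ P) (hy : y ∈ P)
    (hxy : x ∉ k ∙ y) : x ∉ Q ⊔ k ∙ y := by
  rintro hxQy
  obtain ⟨q, hq, _, hz, rfl⟩ := Submodule.mem_sup.1 hxQy
  obtain ⟨c, rfl⟩ := Submodule.mem_span_singleton.1 hz
  have hqP : q ∈ P := by simpa using P.sub_mem hx (P.smul_mem c hy)
  have hq0 : q = 0 := (Submodule.mem_bot k).1 (hPQ ▸ ⟨hqP, hq⟩)
  exact hxy (by simpa [hq0] using Submodule.smul_mem _ c (Submodule.mem_span_singleton_self y))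

theorem Projectivization.rep_mem_span_rep_iff {k V : Type*} [Field k] [AddCommGroup V]
    [Module k V] {x y : Projectivization k V} : x.rep ∈ k ∙ y.rep ↔ x = y := by
  refine ⟨fun h => ?_, fun h => h ▸ Submodule.mem_span_singleton_self _⟩
  obtain ⟨c, hc⟩ := Submodule.mem_span_singleton.1 h
  rw [← x.mk_rep, ← y.mk_rep, Projectivization.mk_eq_mk_iff']
  exact ⟨c, hc⟩

theorem MvPolynomial.exists_isHomogeneous_vanishing_of_notMem {k σ ι : Type*} [Field k]
    [Fintype σ] [DecidableEq σ] [Fintype ι] (W : ι → Submodule k (σ → k)) {v : σ → k}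
    (hv : ∀ i, v ∉ W i) :
    ∃ F : MvPolynomial σ k, F.IsHomogeneous (Fintype.card ι) ∧
      (∀ i, ∀ w ∈ W i, eval w F = 0) ∧ eval v F ≠ 0 := by
  choose φ hφv hφW using fun i => (W i).exists_le_ker_of_notMem (hv i)
  -- the `i`-th row of `M` is the linear form `φ i`
  set M := LinearMap.toMatrix' (LinearMap.pi φ)
  have hM : ∀ c i, eval c (M.toMvPolynomial i) = φ i c := fun c i => by
    simp [M, Matrix.toMvPolynomial_eval_eq_apply, LinearMap.toMatrix'_mulVec]
  refine ⟨∏ i, M.toMvPolynomial i, ?_, fun i w hw => ?_, ?_⟩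
  · convert IsHomogeneous.prod _ _ (fun _ => 1) fun i _ => M.toMvPolynomial_isHomogeneous i
    simp
  · simpa [map_prod, hM] using
      Finset.prod_eq_zero (Finset.mem_univ i) (LinearMap.mem_ker.1 (hφW i hw))
  · simpa [map_prod, hM, Finset.prod_eq_zero_iff] using hφv

theorem IsCB.exists_mem_forall_rep_notMem {k : Type*} [Field k] {n r : ℕ}
    {Γ : Set (ProjSpace k n)} (hCB : IsCB r Γ) {x : ProjSpace k n} (hx : x ∈ Γ)
    (W : Fin r → Submodule k (Fin (n + 1) → k)) (hxW : ∀ t, x.rep ∉ W t) :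
    ∃ y ∈ Γ, y ≠ x ∧ ∀ t, y.rep ∉ W t := by
  obtain ⟨F, hF, hFW, hFx⟩ := MvPolynomial.exists_isHomogeneous_vanishing_of_notMem W hxW
  rw [Fintype.card_fin] at hF
  by_contra! h
  exact hFx (hCB F hF x hx fun y hy hyx => by
    obtain ⟨t, ht⟩ := h y hy hyx
    exact hFW t _ ht)

theorem IsCB.add_two_le_ncard_or_add_two_le_length {k : Type*} [Field k] {n r : ℕ}
    {Γ : Set (ProjSpace k n)} (hfin : Γ.Finite) (hCB : IsCB r Γ) {C : PlaneConfig k n}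
    (hskew : C.Skew) (hsub : Γ ⊆ C.points) {i : Fin C.length}
    (hne : (Γ ∩ projSet (C.P i)).Nonempty) :
    r + 2 ≤ (Γ ∩ projSet (C.P i)).ncard ∨ r + 2 ≤ C.length := by
  by_contra! ⟨hΓi, hlength⟩
  obtain ⟨x, hxΓ, hxP⟩ := hne
  set T := (Γ ∩ projSet (C.P i)) \ {x}
  have hTfin : T.Finite := hfin.subset fun y hy => hy.1.1
  have hT : ((·.rep) '' T).ncard ≤ r := by
    have : T.ncard = (Γ ∩ projSet (C.P i)).ncard - 1 := ncard_sdiff_singleton_of_mem ⟨hxΓ, hxP⟩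
    have := ncard_image_le (f := (·.rep)) hTfin
    omega
  have hJ : (C.P '' {i}ᶜ).ncard ≤ r := by
    have := ncard_image_le (f := C.P) (toFinite {i}ᶜ)
    have : ({i}ᶜ : Set (Fin C.length)).ncard = C.length - 1 := by
      rw [ncard_compl, ncard_singleton, Nat.card_eq_fintype_card, Fintype.card_fin]
    omega
  obtain ⟨A, hA, hA'⟩ := (toFinite _).exists_fin_range_cover hJ ⊥
  obtain ⟨b, hb, hb'⟩ := (hTfin.image _).exists_fin_range_cover hT 0
  have hxAb : ∀ t, x.rep ∉ A t ⊔ k ∙ b t := fun t => by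
    refine Submodule.notMem_sup_span_singleton (P := C.P i) ?_ hxP ?_ ?_
    · obtain h | ⟨j, hji, h⟩ := hA' ⟨t, rfl⟩
      · simp [h]
      · exact h ▸ hskew i j (Ne.symm hji)
    · obtain h | ⟨y, hy, h⟩ := hb' ⟨t, rfl⟩
      · exact h ▸ zero_mem _
      · exact h ▸ hy.1.2
    · obtain h | ⟨y, hy, h⟩ := hb' ⟨t, rfl⟩
      · simpa [h] using x.rep_nonzero
      · rw [← h, Projectivization.rep_mem_span_rep_iff]
        exact fun hxy => hy.2 hxy.symm
  obtain ⟨y, hyΓ, hyx, hy⟩ := hCB.exists_mem_forall_rep_notMem hxΓ _ hxAb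
  obtain ⟨j, hyj⟩ := mem_iUnion.1 (hsub hyΓ)
  by_cases hji : j = i
  · subst hji
    obtain ⟨t, ht⟩ := hb ⟨y, ⟨⟨hyΓ, hyj⟩, hyx⟩, rfl⟩
    exact hy t (Submodule.mem_sup_right (ht ▸ Submodule.mem_span_singleton_self _))
  · obtain ⟨t, ht⟩ := hA ⟨j, hji, rfl⟩
    exact hy t (Submodule.mem_sup_left (ht ▸ hyj))

theorem balancing_general {k : Type*} [Field k] {n : ℕ} (r : ℕ)
    (Γ : Set (ProjSpace k n)) (hfin : Γ.Finite) (hCB : IsCB r Γ)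
    (C : PlaneConfig k n) (hskew : C.Skew) (hsub : Γ ⊆ C.points)
    (hne : ∀ i, (Γ ∩ projSet (C.P i)).Nonempty) :
    (∀ i, max C.length (r + 2) ≤ (Γ ∩ projSet (C.P i)).ncard) ∨
    ((∃ i, (Γ ∩ projSet (C.P i)).ncard < C.length) ∧ r + 2 ≤ C.length) := by
  rcases lt_or_ge C.length (r + 2) with hshort | hlong
  · refine Or.inl fun i => ?_
    have := (hCB.add_two_le_ncard_or_add_two_le_length hfin hskew hsub (hne i)).resolve_right
      (by omega)
    exact max_le (by omega) this
  by_cases hbig : ∀ i, C.length ≤ (Γ ∩ projSet (C.P i)).ncard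
  · exact Or.inl fun i => max_le (hbig i) (hlong.trans (hbig i))
  · push Not at hbig
    exact Or.inr ⟨hbig, hlong⟩

/-- Balancing proposition: for `Γ` satisfying `CB(r)` contained in a skew plane
configuration meeting every plane, either every plane contains at least
`max(ℓ, r + 2)` points of `Γ`, or some plane contains fewer than `ℓ` points and
moreover `ℓ ≥ r + 2`, where `ℓ` is the length of the configuration. -/
theorem balancing {k : Type*} [Field k] [Infinite k] {n : ℕ} (r : ℕ)
    (Γ : Set (ProjSpace k n)) (hfin : Γ.Finite) (hCB : IsCB r Γ)
    (C : PlaneConfig k n) (hskew : C.Skew) (hsub : Γ ⊆ C.points)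
    (hne : ∀ i, (Γ ∩ projSet (C.P i)).Nonempty) :
    (∀ i, max C.length (r + 2) ≤ (Γ ∩ projSet (C.P i)).ncard) ∨
    ((∃ i, (Γ ∩ projSet (C.P i)).ncard < C.length) ∧ r + 2 ≤ C.length) :=
  balancing_general r Γ hfin hCB C hskew hsub hne
end

section
/- Case r = 1: Let d ≥ 0 and let Γ ⊆ ℙⁿ be a finite set satisfying CB(1) with |Γ| ≤ d + 2. Then Γ lies on a projective linear subspace of dimension at most d (i.e., the linear span of Γ has dimension at most d). -/
open MvPolynomial

open Module

/-! A point of `Γ` outside the span of the others would be separated from them by a linear form,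
that is, by a form of degree `1` vanishing on the other points but not on it, against `CB(1)`.
So `Γ` spans the same space as `Γ` minus any one of its points, which has dimension at most
`|Γ| - 1 ≤ d + 1`. -/

theorem Module.Dual.exists_isHomogeneous_one_eval_eq {R ι : Type*} [CommRing R] [Fintype ι]
    [DecidableEq ι] (f : Dual R (ι → R)) :
    ∃ F : MvPolynomial ι R, F.IsHomogeneous 1 ∧ ∀ v, MvPolynomial.eval v F = f v :=
  ⟨(LinearMap.toMatrix' (LinearMap.pi fun _ : Unit => f)).toMvPolynomial (),
    Matrix.toMvPolynomial_isHomogeneous _ _, fun v => by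
      rw [Matrix.toMvPolynomial_eval_eq_apply, LinearMap.toMatrix'_mulVec]
      rfl⟩

theorem finrank_span_image_le_ncard {R M α : Type*} [Ring R] [StrongRankCondition R]
    [AddCommGroup M] [Module R M] (v : α → M) {s : Set α} (hs : s.Finite) :
    finrank R (Submodule.span R (v '' s)) ≤ s.ncard := by
  classical
  calc finrank R (Submodule.span R (v '' s))
      = ((hs.toFinset.image v : Finset M) : Set M).finrank R := by
        rw [Set.finrank, Finset.coe_image, hs.coe_toFinset]
    _ ≤ (hs.toFinset.image v).card := finrank_span_finset_le_card _
    _ ≤ hs.toFinset.card := Finset.card_image_le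
    _ = s.ncard := (Set.ncard_eq_toFinset_card s hs).symm

theorem IsCB.rep_mem_span_rep_diff {k : Type*} [Field k] {n : ℕ} {Γ : Set (ProjSpace k n)}
    (hCB : IsCB 1 Γ) {x : ProjSpace k n} (hx : x ∈ Γ) :
    x.rep ∈ Submodule.span k (Projectivization.rep '' (Γ \ {x})) := by
  by_contra hnot
  obtain ⟨f, hfx, hf⟩ := Submodule.exists_dual_map_eq_bot_of_notMem hnot inferInstance
  obtain ⟨F, hF, hFf⟩ := f.exists_isHomogeneous_one_eval_eq
  refine hfx ?_
  rw [← hFf]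
  refine hCB F hF x hx fun y hy hyx => ?_
  have hmem : f y.rep ∈ (Submodule.span k (Projectivization.rep '' (Γ \ {x}))).map f :=
    Submodule.mem_map_of_mem (Submodule.subset_span ⟨y, ⟨hy, hyx⟩, rfl⟩)
  rwa [hf, Submodule.mem_bot, ← hFf] at hmem

theorem case_r_eq_one_general {k : Type*} [Field k] {n : ℕ} (d : ℕ)
    (Γ : Set (ProjSpace k n)) (hfin : Γ.Finite) (hCB : IsCB 1 Γ)
    (hcard : Γ.ncard ≤ d + 2) :
    ∃ W : Submodule k (Fin (n + 1) → k),
      Module.finrank k W ≤ d + 1 ∧ Γ ⊆ projSet W := by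
  rcases Γ.eq_empty_or_nonempty with rfl | ⟨x, hx⟩
  · exact ⟨⊥, by simp, Set.empty_subset _⟩
  refine ⟨Submodule.span k (Projectivization.rep '' (Γ \ {x})), ?_, fun y hy => ?_⟩
  · calc _ ≤ (Γ \ {x}).ncard := finrank_span_image_le_ncard _ hfin.sdiff
      _ = Γ.ncard - 1 := Set.ncard_sdiff_singleton_of_mem hx
      _ ≤ d + 1 := by omega
  · rcases eq_or_ne y x with rfl | hyx
    · exact hCB.rep_mem_span_rep_diff hy
    · exact Submodule.subset_span ⟨y, ⟨hy, hyx⟩, rfl⟩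

/-- Case `r = 1`: a finite set satisfying `CB(1)` with at most `d + 2` points lies on a
projective linear subspace of dimension at most `d`. -/
theorem case_r_eq_one {k : Type*} [Field k] [Infinite k] {n : ℕ} (d : ℕ)
    (Γ : Set (ProjSpace k n)) (hfin : Γ.Finite) (hCB : IsCB 1 Γ)
    (hcard : Γ.ncard ≤ d + 2) :
    ∃ W : Submodule k (Fin (n + 1) → k),
      Module.finrank k W ≤ d + 1 ∧ Γ ⊆ projSet W :=
  case_r_eq_one_general d Γ hfin hCB hcard
end

section
/- Case r = 2: Let d ≥ 0 and let Γ ⊆ ℙⁿ be a finite set satisfying CB(2) with |Γ| ≤ 2d + 3. Then Γ lies on a projective linear subspace of dimension at most d (i.e., the linear span of Γ has dimension at most d). -/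
open MvPolynomial

open Module Submodule

/-
A quadric through all of `Γ` but one point `x` is the product of two linear forms; it exists as
soon as `Γ \ {x}` is covered by two hyperplanes missing `x`. If the span of `Γ` had dimension
`t ≥ d + 2`, choose `t` points of `Γ` with independent representatives. The remaining
`|Γ| - t ≤ d + 1 < t` points span a proper subspace of the span of `Γ`, so it misses one of the
chosen points `x`; and `x` also misses the span of the other `t - 1` chosen points. Hyperplanes
through these two subspaces that avoid `x` give a quadric contradicting `CB(2)`.
-/

section LinearForm

variable {k σ : Type*} [Field k] [Fintype σ] [DecidableEq σ]

noncomputable def linearFormPoly (f : Dual k (σ → k)) : MvPolynomial σ k :=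
  ∑ i, C (f (Pi.single i 1)) * X i

theorem isHomogeneous_linearFormPoly (f : Dual k (σ → k)) :
    (linearFormPoly f).IsHomogeneous 1 :=
  IsHomogeneous.sum _ _ _ fun i _ => isHomogeneous_C_mul_X _ i

theorem eval_linearFormPoly (f : Dual k (σ → k)) (w : σ → k) :
    eval w (linearFormPoly f) = f w := by
  conv_rhs => rw [pi_eq_sum_univ' w, map_sum]
  simp [linearFormPoly, mul_comm]

end LinearForm

theorem Projectivization.rep_injective {k V : Type*} [DivisionRing k] [AddCommGroup V]
    [Module k V] : Function.Injective (Projectivization.rep : Projectivization k V → V) :=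
  fun _ _ h => Quotient.out_injective (Subtype.ext h)

theorem IsCB.exists_rep_mem {k : Type*} [Field k] {n r : ℕ} {Γ : Set (ProjSpace k n)}
    (hCB : IsCB r Γ) (W : Fin r → Submodule k (Fin (n + 1) → k)) {x : ProjSpace k n}
    (hx : x ∈ Γ) (hcover : ∀ y ∈ Γ, y ≠ x → ∃ i, y.rep ∈ W i) : ∃ i, x.rep ∈ W i := by
  by_contra! hxW
  choose f hfx hWf using fun i => (W i).exists_le_ker_of_notMem (hxW i)
  have hF : (∏ i, linearFormPoly (f i)).IsHomogeneous r := by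
    simpa using IsHomogeneous.prod Finset.univ _ (fun _ => 1) fun i _ =>
      isHomogeneous_linearFormPoly (f i)
  have hvanish : ∀ y ∈ Γ, y ≠ x → eval y.rep (∏ i, linearFormPoly (f i)) = 0 := by
    intro y hy hyx
    obtain ⟨i, hi⟩ := hcover y hy hyx
    rw [map_prod]
    exact Finset.prod_eq_zero (Finset.mem_univ i) ((eval_linearFormPoly _ _).trans (hWf i hi))
  have hx0 := hCB _ hF x hx hvanish
  rw [map_prod, Finset.prod_eq_zero_iff] at hx0
  obtain ⟨i, -, hi⟩ := hx0
  exact hfx i ((eval_linearFormPoly _ _).symm.trans hi)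

theorem Set.Finite.exists_mem_separated_by_two_submodules {K V : Type*} [Field K]
    [AddCommGroup V] [Module K V] {S : Set V} (hS : S.Finite)
    (hcard : S.ncard < 2 * finrank K (span K S)) :
    ∃ v ∈ S, ∃ A B : Submodule K V, v ∉ A ∧ v ∉ B ∧ ∀ w ∈ S, w ≠ v → w ∈ A ∨ w ∈ B := by
  obtain ⟨b, hbS, hbspan, hbli⟩ := exists_linearIndependent K S
  replace hbli : LinearIndepOn K id b := hbli
  have hbfin : b.Finite := hS.subset hbS
  have hRfin : (S \ b).Finite := hS.sdiff
  have hbcard : b.ncard = finrank K (span K S) := by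
    have := hbfin.fintype
    rw [Set.ncard_eq_toFinset_card', ← hbspan, finrank_span_set_eq_card hbli]
  have hRcard : finrank K (span K (S \ b)) ≤ (S \ b).ncard := by
    have := hRfin.fintype
    exact (finrank_span_le_card _).trans (Set.ncard_eq_toFinset_card' _).ge
  obtain ⟨v, hvb, hvR⟩ : ∃ v ∈ b, v ∉ span K (S \ b) := by
    by_contra! hall
    have := FiniteDimensional.span_of_finite K hRfin
    have := Submodule.finrank_mono (hbspan ▸ span_le.2 hall : span K S ≤ span K (S \ b))
    rw [Set.ncard_sdiff hbS hbfin] at hRcard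
    omega
  have hvb' : v ∉ span K (b \ {v}) := by
    have hli : LinearIndepOn K id (b \ {v}) := hbli.mono Set.sdiff_subset
    rw [hli.notMem_span_iff_id, Set.insert_sdiff_singleton, Set.insert_eq_of_mem hvb]
    exact ⟨hbli, fun h => h.2 rfl⟩
  refine ⟨v, hbS hvb, _, _, hvb', hvR, fun w hwS hwv => ?_⟩
  by_cases hwb : w ∈ b
  · exact .inl (subset_span ⟨hwb, hwv⟩)
  · exact .inr (subset_span ⟨hwS, hwb⟩)

theorem case_r_eq_two_general {k : Type*} [Field k] {n : ℕ} (d : ℕ)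
    (Γ : Set (ProjSpace k n)) (hfin : Γ.Finite) (hCB : IsCB 2 Γ)
    (hcard : Γ.ncard ≤ 2 * d + 3) :
    ∃ W : Submodule k (Fin (n + 1) → k),
      Module.finrank k W ≤ d + 1 ∧ Γ ⊆ projSet W := by
  set S := Projectivization.rep '' Γ
  refine ⟨span k S, ?_, fun y hy => subset_span ⟨y, hy, rfl⟩⟩
  by_contra! hbig
  have hS : S.ncard < 2 * finrank k (span k S) := by
    rw [Set.ncard_image_of_injective _ Projectivization.rep_injective]
    omega
  obtain ⟨_, ⟨x, hx, rfl⟩, A, B, hA, hB, hcover⟩ :=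
    (hfin.image _).exists_mem_separated_by_two_submodules hS
  obtain ⟨i, hi⟩ := hCB.exists_rep_mem ![A, B] hx fun y hy hyx => by
    rcases hcover y.rep ⟨y, hy, rfl⟩ (Projectivization.rep_injective.ne hyx) with h | h
    exacts [⟨0, h⟩, ⟨1, h⟩]
  fin_cases i
  exacts [hA hi, hB hi]

/-- Case `r = 2`: a finite set satisfying `CB(2)` with at most `2d + 3` points lies on a
projective linear subspace of dimension at most `d`. -/
theorem case_r_eq_two {k : Type*} [Field k] [Infinite k] {n : ℕ} (d : ℕ)
    (Γ : Set (ProjSpace k n)) (hfin : Γ.Finite) (hCB : IsCB 2 Γ)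
    (hcard : Γ.ncard ≤ 2 * d + 3) :
    ∃ W : Submodule k (Fin (n + 1) → k),
      Module.finrank k W ≤ d + 1 ∧ Γ ⊆ projSet W :=
  case_r_eq_two_general d Γ hfin hCB hcard
end

section
/- Case d = 1 (Bastianelli–Cortini–De Poi): Let r ≥ 1 and let Γ ⊆ ℙⁿ be a finite set satisfying CB(r) with |Γ| ≤ 2r + 1. Then Γ lies on a line (i.e., the linear span of Γ has dimension at most 1). -/
open MvPolynomial

/-!
By `CB(r)`, no `r` linear subspaces can cover `Γ \ {z}` while missing `z ∈ Γ`: the product of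
linear forms cutting them out, padded to degree `r`, would vanish on `Γ \ {z}` but not at `z`.

If a line `L` holds at least `r + 2` points of `Γ`, then for `z ∈ Γ` off `L`, the line `L`
together with the at most `r - 2` other points off `L` is such a cover, so `Γ ⊆ L`. Otherwise,
for `x ∈ Γ`, every line through `x` holds at most `r` points of `Γ \ {x}`. Since there are at
most `2r` of those, they can be grouped into at most `r` singletons and pairs lying on different
lines through `x` (pair a point of a most populated line with a point of another line, and
induct). The spans of these groups miss `x`, which again contradicts `CB(r)`.
-/

open Finset

section Forms

variable {k σ : Type*} [Field k] [Fintype σ] [DecidableEq σ]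

noncomputable def dualToMvPolynomial (f : Module.Dual k (σ → k)) : MvPolynomial σ k :=
  ∑ i, C (f (Pi.single i 1)) * X i

theorem isHomogeneous_dualToMvPolynomial (f : Module.Dual k (σ → k)) :
    (dualToMvPolynomial f).IsHomogeneous 1 :=
  IsHomogeneous.sum _ _ _ fun i _ => isHomogeneous_C_mul_X _ i

@[simp]
theorem eval_dualToMvPolynomial (f : Module.Dual k (σ → k)) (v : σ → k) :
    eval v (dualToMvPolynomial f) = f v := by
  conv_rhs => rw [← Finset.univ_sum_single v]
  simp only [dualToMvPolynomial, map_sum, eval_mul, eval_C, eval_X]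
  refine Finset.sum_congr rfl fun i _ => ?_
  rw [mul_comm, ← smul_eq_mul, ← map_smul, ← Pi.single_smul', smul_eq_mul, mul_one]

end Forms

theorem Submodule.exists_dual_apply_ne_zero_of_notMem {k V : Type*} [Field k] [AddCommGroup V]
    [Module k V] {W : Submodule k V} {v : V} (hv : v ∉ W) :
    ∃ f : Module.Dual k V, f v ≠ 0 ∧ ∀ w ∈ W, f w = 0 := by
  obtain ⟨f, hfv, hfW⟩ := W.exists_dual_map_eq_bot_of_notMem hv inferInstance
  exact ⟨f, hfv, fun w hw => by simpa [hfW] using Submodule.mem_map_of_mem (f := f) hw⟩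

theorem exists_isHomogeneous_eval_ne_zero {k σ : Type*} [Field k] [Fintype σ] [DecidableEq σ]
    {v : σ → k} (hv : v ≠ 0) (S : Finset (Submodule k (σ → k))) (hS : ∀ W ∈ S, v ∉ W)
    {m : ℕ} (hm : #S ≤ m) :
    ∃ F : MvPolynomial σ k, F.IsHomogeneous m ∧ (∀ W ∈ S, ∀ w ∈ W, eval w F = 0) ∧
      eval v F ≠ 0 := by
  obtain ⟨f₀, hf₀v, -⟩ := (⊥ : Submodule k (σ → k)).exists_dual_apply_ne_zero_of_notMem
    (by simpa using hv)
  choose! f hfv hfW using fun W hW => Submodule.exists_dual_apply_ne_zero_of_notMem (hS W hW)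
  refine ⟨dualToMvPolynomial f₀ ^ (m - #S) * ∏ W ∈ S, dualToMvPolynomial (f W), ?_, ?_, ?_⟩
  · have hprod := IsHomogeneous.prod S (fun W => dualToMvPolynomial (f W)) (fun _ => 1)
      fun W _ => isHomogeneous_dualToMvPolynomial (f W)
    convert ((isHomogeneous_dualToMvPolynomial f₀).pow (m - #S)).mul hprod using 1
    simp only [sum_const, smul_eq_mul, mul_one]
    omega
  · intro W hW w hw
    rw [map_mul, map_prod, Finset.prod_eq_zero hW (by simp [hfW W hW w hw]), mul_zero]
  · simpa [Finset.prod_ne_zero_iff, hf₀v] using hfv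

namespace Projectivization

open scoped LinearAlgebra.Projectivization

variable {K V : Type*} [DivisionRing K] [AddCommGroup V] [Module K V]

theorem eq_of_rep_mem_span_singleton {a b : ℙ K V} (h : a.rep ∈ K ∙ b.rep) : a = b := by
  obtain ⟨c, hc⟩ := Submodule.mem_span_singleton.mp h
  rw [← a.mk_rep, ← b.mk_rep, mk_eq_mk_iff']
  exact ⟨c, hc⟩

theorem span_rep_pair_eq_of_rep_mem {x a b : ℙ K V} (hxb : x ≠ b)
    (h : x.rep ∈ Submodule.span K {a.rep, b.rep}) :
    Submodule.span K {x.rep, b.rep} = Submodule.span K {a.rep, b.rep} := by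
  have ha : a.rep ∈ Submodule.span K {x.rep, b.rep} :=
    mem_span_insert_exchange h fun hx => hxb (eq_of_rep_mem_span_singleton hx)
  apply le_antisymm <;> rw [Submodule.span_le, Set.insert_subset_iff] <;>
    exact ⟨‹_›, Set.singleton_subset_iff.mpr (Submodule.subset_span (by simp))⟩

theorem span_rep_pair_eq_span_rep_pair {x a b : ℙ K V} (hxa : x ≠ a) (hxb : x ≠ b)
    (h : x.rep ∈ Submodule.span K {a.rep, b.rep}) :
    Submodule.span K {x.rep, a.rep} = Submodule.span K {x.rep, b.rep} := by
  rw [span_rep_pair_eq_of_rep_mem hxb h,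
    span_rep_pair_eq_of_rep_mem hxa (Set.pair_comm a.rep b.rep ▸ h), Set.pair_comm]

end Projectivization

section Pairing

variable {α β : Type*} [DecidableEq α] [DecidableEq β]

theorem Finset.card_filter_sdiff_pair_le (f : α → β) {T : Finset α} {r : ℕ}
    (hT : #T ≤ 2 * r + 2) (hfib : ∀ c ∈ T, #{d ∈ T | f d = f c} ≤ r + 1) {a b : α}
    (ha : a ∈ T) (hb : b ∈ T) (hab : f a ≠ f b)
    (hmax : ∀ c ∈ T, #{d ∈ T | f d = f c} ≤ #{d ∈ T | f d = f a}) :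
    ∀ c ∈ T, #{d ∈ T \ {a, b} | f d = f c} ≤ r := by
  intro c hc
  have hsub : {d ∈ T \ {a, b} | f d = f c} ⊆ {d ∈ T | f d = f c} :=
    filter_subset_filter _ sdiff_subset
  have hdrop : ∀ e ∈ ({a, b} : Finset α), e ∈ T → f e = f c →
      #{d ∈ T \ {a, b} | f d = f c} ≤ r := by
    intro e he heT hec
    have : {d ∈ T \ {a, b} | f d = f c} ⊆ {d ∈ T | f d = f c}.erase e := fun d hd => by
      rw [mem_filter, mem_sdiff] at hd
      exact mem_erase.mpr ⟨fun hde => hd.1.2 (hde ▸ he), mem_filter.mpr ⟨hd.1.1, hd.2⟩⟩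
    have := card_le_card this
    rw [card_erase_of_mem (mem_filter.mpr ⟨heT, hec⟩)] at this
    have := hfib c hc
    omega
  by_cases hca : f c = f a
  · exact hdrop a (by simp) ha hca.symm
  by_cases hcb : f c = f b
  · exact hdrop b (by simp) hb hcb.symm
  have hdisj : Disjoint {d ∈ T | f d = f c} {d ∈ T | f d = f a} :=
    disjoint_filter.mpr fun d _ hdc hda => hca (hdc ▸ hda)
  have hunion : {d ∈ T | f d = f c} ∪ {d ∈ T | f d = f a} ⊆ T.erase b := fun d hd => by
    rcases mem_union.mp hd with hd | hd <;> rw [mem_filter] at hd <;>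
      exact mem_erase.mpr ⟨fun hdb => by simp_all, hd.1⟩
  have := card_le_card hunion
  rw [card_union_of_disjoint hdisj, card_erase_of_mem hb] at this
  have := hmax c hc
  have := card_le_card hsub
  omega

theorem Finset.exists_pairs_cover_of_card_fiber_le (f : α → β) (r : ℕ) (T : Finset α)
    (hT : #T ≤ 2 * r) (hfib : ∀ c ∈ T, #{d ∈ T | f d = f c} ≤ r) :
    ∃ B : Finset (α × α), #B ≤ r ∧
      (∀ p ∈ B, p.1 ∈ T ∧ p.2 ∈ T ∧ (p.1 = p.2 ∨ f p.1 ≠ f p.2)) ∧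
      ∀ c ∈ T, ∃ p ∈ B, c = p.1 ∨ c = p.2 := by
  induction r generalizing T with
  | zero => exact ⟨∅, by simp, by simp, by simp_all⟩
  | succ r ih =>
    by_cases hconst : ∀ a ∈ T, ∀ b ∈ T, f a = f b
    · refine ⟨T.image fun c => (c, c), ?_, by simp, fun c hc => ⟨(c, c), by simp [hc], by simp⟩⟩
      rcases T.eq_empty_or_nonempty with rfl | ⟨c, hc⟩
      · simp
      · have hfc : {d ∈ T | f d = f c} = T := filter_true_of_mem fun d hd => hconst d hd c hc
        exact card_image_le.trans (hfc ▸ hfib c hc)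
    push Not at hconst
    obtain ⟨a₀, ha₀, b₀, hb₀, hab₀⟩ := hconst
    obtain ⟨a, ha, hmax⟩ := T.exists_max_image (fun c => #{d ∈ T | f d = f c}) ⟨a₀, ha₀⟩
    obtain ⟨b, hb, hab⟩ : ∃ b ∈ T, f a ≠ f b := by
      by_cases h : f a = f a₀
      · exact ⟨b₀, hb₀, h ▸ hab₀⟩
      · exact ⟨a₀, ha₀, h⟩
    have hfib' := card_filter_sdiff_pair_le f (by omega) hfib ha hb hab hmax
    have hcard : #(T \ {a, b}) ≤ 2 * r := by
      rw [card_sdiff_of_subset (by simp [insert_subset_iff, ha, hb]),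
        card_pair fun h => hab (congrArg f h)]
      omega
    obtain ⟨B, hBcard, hB, hcover⟩ :=
      ih (T \ {a, b}) hcard fun c hc => hfib' c (sdiff_subset hc)
    refine ⟨insert (a, b) B, card_insert_le _ _ |>.trans (by omega), ?_, ?_⟩
    · simp only [mem_insert, forall_eq_or_imp]
      exact ⟨⟨ha, hb, .inr hab⟩, fun p hp => by
        obtain ⟨h1, h2, h3⟩ := hB p hp
        exact ⟨sdiff_subset h1, sdiff_subset h2, h3⟩⟩
    · intro c hc
      by_cases hcab : c = a ∨ c = b
      · exact ⟨(a, b), mem_insert_self _ _, hcab⟩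
      · obtain ⟨p, hp, hcp⟩ := hcover c (by simp_all)
        exact ⟨p, mem_insert_of_mem hp, hcp⟩

end Pairing

theorem finrank_span_pair_le {K V : Type*} [DivisionRing K] [AddCommGroup V] [Module K V]
    (u v : V) : Module.finrank K (Submodule.span K {u, v}) ≤ 2 := by
  classical
  have := finrank_span_finset_le_card (R := K) ({u, v} : Finset V)
  rw [Finset.coe_pair] at this
  exact this.trans card_le_two

section CayleyBacharach

open scoped Classical

variable {k : Type*} [Field k] {n : ℕ} {r : ℕ}

theorem IsCB.exists_rep_mem_of_cover {Γ : Set (ProjSpace k n)} (hCB : IsCB r Γ)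
    {z : ProjSpace k n} (hz : z ∈ Γ) (S : Finset (Submodule k (Fin (n + 1) → k)))
    (hS : #S ≤ r) (hcover : ∀ y ∈ Γ, y ≠ z → ∃ W ∈ S, y.rep ∈ W) :
    ∃ W ∈ S, z.rep ∈ W := by
  by_contra! hzS
  obtain ⟨F, hF, hFS, hFz⟩ := exists_isHomogeneous_eval_ne_zero z.rep_nonzero S hzS hS
  refine hFz (hCB F hF z hz fun y hy hyz => ?_)
  obtain ⟨W, hW, hyW⟩ := hcover y hy hyz
  exact hFS W hW _ hyW

variable {Γ : Finset (ProjSpace k n)}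

theorem IsCB.subset_projSet_of_add_two_le_card (hCB : IsCB r (Γ : Set (ProjSpace k n)))
    (hcard : #Γ ≤ 2 * r + 1) {W : Submodule k (Fin (n + 1) → k)}
    (hW : r + 2 ≤ #{y ∈ Γ | y.rep ∈ W}) : (Γ : Set (ProjSpace k n)) ⊆ projSet W := by
  intro z hz
  by_contra hzW
  set off := {y ∈ Γ | y.rep ∉ W}
  have hsplit : #{y ∈ Γ | y.rep ∈ W} + #off = #Γ := card_filter_add_card_filter_not _
  have hzoff : z ∈ off := mem_filter.mpr ⟨hz, hzW⟩
  obtain ⟨V, hV, hzV⟩ := hCB.exists_rep_mem_of_cover hz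
    (insert W ((off.erase z).image fun y => k ∙ y.rep))
    (by
      have := card_image_le (s := off.erase z) (f := fun y => k ∙ y.rep)
      have := card_insert_le W ((off.erase z).image fun y => k ∙ y.rep)
      rw [card_erase_of_mem hzoff] at *
      omega)
    (fun y hy hyz => by
      by_cases hyW : y.rep ∈ W
      · exact ⟨W, mem_insert_self _ _, hyW⟩
      · have hyoff : y ∈ off.erase z := mem_erase.mpr ⟨hyz, mem_filter.mpr ⟨hy, hyW⟩⟩
        exact ⟨k ∙ y.rep, mem_insert_of_mem (mem_image_of_mem _ hyoff),
          Submodule.mem_span_singleton_self _⟩)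
  rcases mem_insert.mp hV with rfl | hV
  · exact hzW hzV
  · obtain ⟨y, hy, rfl⟩ := mem_image.mp hV
    exact ne_of_mem_erase hy (Projectivization.eq_of_rep_mem_span_singleton hzV).symm

theorem IsCB.exists_finrank_le_two_add_two_le_card (hCB : IsCB r (Γ : Set (ProjSpace k n)))
    (hcard : #Γ ≤ 2 * r + 1) {x : ProjSpace k n} (hx : x ∈ Γ) :
    ∃ W : Submodule k (Fin (n + 1) → k), Module.finrank k W ≤ 2 ∧
      r + 2 ≤ #{y ∈ Γ | y.rep ∈ W} := by
  by_contra! hpoor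
  set line := fun a : ProjSpace k n => Submodule.span k {x.rep, a.rep}
  have hfib : ∀ a ∈ Γ.erase x, #{b ∈ Γ.erase x | line b = line a} ≤ r := fun a _ => by
    have hsub : insert x {b ∈ Γ.erase x | line b = line a} ⊆ {y ∈ Γ | y.rep ∈ line a} := by
      intro y hy
      rcases mem_insert.mp hy with rfl | hy
      · exact mem_filter.mpr ⟨hx, Submodule.subset_span (by simp)⟩
      · obtain ⟨hy, hya⟩ := mem_filter.mp hy
        exact mem_filter.mpr ⟨mem_of_mem_erase hy, hya ▸ Submodule.subset_span (by simp)⟩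
    have := card_le_card hsub
    rw [card_insert_of_notMem (by simp)] at this
    have := hpoor (line a) (finrank_span_pair_le _ _)
    omega
  obtain ⟨B, hBcard, hB, hcover⟩ := exists_pairs_cover_of_card_fiber_le line r (Γ.erase x)
    (by rw [card_erase_of_mem hx]; omega) hfib
  obtain ⟨W, hW, hxW⟩ := hCB.exists_rep_mem_of_cover hx
    (B.image fun p => Submodule.span k {p.1.rep, p.2.rep}) (card_image_le.trans hBcard)
    (fun y hy hyx => by
      obtain ⟨p, hp, hyp⟩ := hcover y (mem_erase.mpr ⟨hyx, hy⟩)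
      refine ⟨_, mem_image_of_mem _ hp, ?_⟩
      rcases hyp with rfl | rfl <;> exact Submodule.subset_span (by simp))
  obtain ⟨⟨a, b⟩, hp, rfl⟩ := mem_image.mp hW
  obtain ⟨ha, hb, hab⟩ := hB _ hp
  dsimp only at ha hb hab hxW
  rcases hab with rfl | hab
  · rw [Set.pair_eq_singleton] at hxW
    exact ne_of_mem_erase ha (Projectivization.eq_of_rep_mem_span_singleton hxW).symm
  · exact hab (Projectivization.span_rep_pair_eq_span_rep_pair
      (ne_of_mem_erase ha).symm (ne_of_mem_erase hb).symm hxW)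

end CayleyBacharach

theorem case_d_eq_one_general {k : Type*} [Field k] {n : ℕ} (r : ℕ)
    (Γ : Set (ProjSpace k n)) (hfin : Γ.Finite) (hCB : IsCB r Γ)
    (hcard : Γ.ncard ≤ 2 * r + 1) :
    ∃ W : Submodule k (Fin (n + 1) → k),
      Module.finrank k W ≤ 2 ∧ Γ ⊆ projSet W := by
  obtain ⟨Γ, rfl⟩ := hfin.exists_finset_coe
  rw [Set.ncard_coe_finset] at hcard
  rcases Γ.eq_empty_or_nonempty with rfl | ⟨x, hx⟩
  · exact ⟨⊥, by simp, by simp⟩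
  obtain ⟨W, hW, hrich⟩ := hCB.exists_finrank_le_two_add_two_le_card hcard hx
  exact ⟨W, hW, hCB.subset_projSet_of_add_two_le_card hcard hrich⟩

/-- Case `d = 1` (Bastianelli--Cortini--De Poi): a finite set satisfying `CB(r)` with at
most `2r + 1` points lies on a line. -/
theorem case_d_eq_one {k : Type*} [Field k] [Infinite k] {n : ℕ} (r : ℕ) (hr : 1 ≤ r)
    (Γ : Set (ProjSpace k n)) (hfin : Γ.Finite) (hCB : IsCB r Γ)
    (hcard : Γ.ncard ≤ 2 * r + 1) :
    ∃ W : Submodule k (Fin (n + 1) → k),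
      Module.finrank k W ≤ 2 ∧ Γ ⊆ projSet W :=
  case_d_eq_one_general r Γ hfin hCB hcard
end
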